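/- arXiv:2103.11831 — 3 statements merged into one kernel-verified Lean document; each statement's English description precedes it below -/
import Mathlib

section
/- An element (x₁,x₂,x₃) of the ring R_F is a unit (i.e., has a two-sided multiplicative inverse) if and only if x₁ ∈ {1,−1} and x₂ ∈ {0,−x₁}; here x₃ ∈ F^×/(F^×)^6 is arbitrary. -/
/-- The subgroup of sixth powers in the unit group of a field. -/
def sixthPowers (F : Type*) [Field F] : Subgroup Fˣ :=
  MonoidHom.range (powMonoidHom 6 : Fˣ →* Fˣ)

/-- The quotient abelian group `Fˣ/(Fˣ)⁶`, written additively. -/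
abbrev AF (F : Type*) [Field F] : Type _ := Additive (Fˣ ⧸ sixthPowers F)

/-- The multiplication on `R_F = ℤ × ℤ × Fˣ/(Fˣ)⁶`. -/
def Rmul {F : Type*} [Field F] (x y : ℤ × ℤ × AF F) : ℤ × ℤ × AF F :=
  (x.1 * y.1,
   x.1 * y.2.1 + x.2.1 * y.1 + 2 * (x.2.1 * y.2.1),
   x.1 • y.2.2 + (y.1 + 2 * y.2.1) • x.2.2)

/-- An element `(x₁,x₂,x₃)` of `R_F` is a (two-sided) unit iff `x₁ ∈ {1,-1}` and
`x₂ ∈ {0,-x₁}`; the component `x₃` is arbitrary. -/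
theorem endo_ring_units (F : Type*) [Field F] (x : ℤ × ℤ × AF F) :
    (∃ y : ℤ × ℤ × AF F, Rmul x y = (1, 0, 0) ∧ Rmul y x = (1, 0, 0)) ↔
      ((x.1 = 1 ∨ x.1 = -1) ∧ (x.2.1 = 0 ∨ x.2.1 = -x.1)) := by
  obtain ⟨x1, x2, x3⟩ := x
  dsimp only
  constructor
  · rintro ⟨⟨y1, y2, y3⟩, h1, h2⟩
    simp only [Rmul, Prod.mk.injEq] at h1 h2
    obtain ⟨e1, e2, -⟩ := h1
    have hs : (x1 + 2 * x2) * (y1 + 2 * y2) = 1 := by linear_combination e1 + 2 * e2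
    have h1' : x1 = 1 ∨ x1 = -1 := by
      rcases Int.eq_one_or_neg_one_of_mul_eq_one' e1 with ⟨h, -⟩ | ⟨h, -⟩ <;> [left; right] <;>
        exact h
    have h2' : x1 + 2 * x2 = 1 ∨ x1 + 2 * x2 = -1 := by
      rcases Int.eq_one_or_neg_one_of_mul_eq_one' hs with ⟨h, -⟩ | ⟨h, -⟩ <;> [left; right] <;>
        exact h
    exact ⟨h1', by omega⟩
  · rintro ⟨h1, h2⟩
    refine ⟨(x1, -(x1 + 2 * x2) * x2 * x1, (-(x1 * (x1 + 2 * x2))) • x3), ?_, ?_⟩ <;>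
      simp only [Rmul, Prod.mk.injEq] <;>
      rcases h1 with rfl | rfl <;> rcases h2 with rfl | rfl <;>
      refine ⟨by ring, by ring, ?_⟩ <;>
      (try norm_num) <;> (try simp [smul_smul]) <;> (try norm_num) <;> (try abel)
end

section
/- The group of units of the ring R_F is abelian if and only if R_F is commutative, i.e., if and only if every square in F^× is a sixth power. In particular, if there exists t ∈ F^×/(F^×)^6 with 2·t ≠ 0, then the units x = (1,−1,0) and y = (1,0,t) of R_F satisfy x·y = (1,−1,t) ≠ (1,−1,−t) = y·x. -/
/-- `x` is a (two-sided) unit of `R_F`. -/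
def RIsUnit {F : Type*} [Field F] (x : ℤ × ℤ × AF F) : Prop :=
  ∃ y : ℤ × ℤ × AF F, Rmul x y = (1, 0, 0) ∧ Rmul y x = (1, 0, 0)

lemma comm_of_two_smul {F : Type*} [Field F] (h : ∀ t : AF F, (2 : ℤ) • t = 0) :
    ∀ x y : ℤ × ℤ × AF F, Rmul x y = Rmul y x := by
  intro x y
  unfold Rmul
  refine Prod.ext (by ring) (Prod.ext (by ring) ?_)
  show x.1 • y.2.2 + (y.1 + 2 * y.2.1) • x.2.2
      = y.1 • x.2.2 + (x.1 + 2 * x.2.1) • y.2.2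
  rw [add_zsmul x.2.2 y.1 (2 * y.2.1), add_zsmul y.2.2 x.1 (2 * x.2.1),
    mul_zsmul x.2.2 2 y.2.1, mul_zsmul y.2.2 2 x.2.1,
    h (y.2.1 • x.2.2), h (x.2.1 • y.2.2)]
  abel

lemma xunit {F : Type*} [Field F] : RIsUnit ((1, -1, 0) : ℤ × ℤ × AF F) := by
  refine ⟨(1, -1, 0), ?_, ?_⟩ <;>
    (simp [Rmul, Prod.ext_iff, one_zsmul, neg_one_zsmul, smul_zero]; try abel)

lemma yunit {F : Type*} [Field F] (t : AF F) : RIsUnit ((1, 0, t) : ℤ × ℤ × AF F) := by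
  refine ⟨(1, 0, -t), ?_, ?_⟩ <;>
    (simp [Rmul, Prod.ext_iff, one_zsmul, neg_one_zsmul, smul_zero]; try abel)

lemma xy {F : Type*} [Field F] (t : AF F) :
    Rmul ((1, -1, 0) : ℤ × ℤ × AF F) (1, 0, t) = (1, -1, t) := by
  (simp [Rmul, Prod.ext_iff, one_zsmul, neg_one_zsmul, smul_zero]; try abel)

lemma yx {F : Type*} [Field F] (t : AF F) :
    Rmul ((1, 0, t) : ℤ × ℤ × AF F) (1, -1, 0) = (1, -1, -t) := by
  (simp [Rmul, Prod.ext_iff, one_zsmul, neg_one_zsmul, smul_zero]; try abel)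

/-- The group of units of `R_F` is abelian iff `R_F` is commutative, iff every element
of `Fˣ/(Fˣ)⁶` is killed by 2; and whenever `t ∈ Fˣ/(Fˣ)⁶` satisfies `2 • t ≠ 0`,
the units `x = (1,-1,0)` and `y = (1,0,t)` witness noncommutativity:
`x*y = (1,-1,t) ≠ (1,-1,-t) = y*x`. -/
theorem endo_ring_units_abelian_iff_comm (F : Type*) [Field F] :
    ((∀ x y : ℤ × ℤ × AF F, RIsUnit x → RIsUnit y → Rmul x y = Rmul y x) ↔
      (∀ x y : ℤ × ℤ × AF F, Rmul x y = Rmul y x)) ∧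
    ((∀ x y : ℤ × ℤ × AF F, Rmul x y = Rmul y x) ↔ ∀ t : AF F, (2 : ℤ) • t = 0) ∧
    (∀ t : AF F, (2 : ℤ) • t ≠ 0 →
      RIsUnit ((1, -1, 0) : ℤ × ℤ × AF F) ∧ RIsUnit ((1, 0, t) : ℤ × ℤ × AF F) ∧
      Rmul ((1, -1, 0) : ℤ × ℤ × AF F) (1, 0, t) = (1, -1, t) ∧
      Rmul ((1, 0, t) : ℤ × ℤ × AF F) (1, -1, 0) = (1, -1, -t) ∧
      ((1, -1, t) : ℤ × ℤ × AF F) ≠ (1, -1, -t)) := by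
  have key : ∀ t : AF F,
      Rmul ((1, -1, 0) : ℤ × ℤ × AF F) (1, 0, t) = Rmul (1, 0, t) (1, -1, 0) →
      (2 : ℤ) • t = 0 := by
    intro t h
    rw [xy, yx, Prod.ext_iff, Prod.ext_iff] at h
    have ht : t = -t := h.2.2
    rw [two_zsmul]
    nth_rewrite 2 [ht]
    exact add_neg_cancel t
  refine ⟨⟨fun h => comm_of_two_smul (fun t => key t (h _ _ xunit (yunit t))),
    fun h _ _ _ _ => h _ _⟩,
    ⟨fun h t => key t (h _ _), comm_of_two_smul⟩, ?_⟩
  intro t ht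
  refine ⟨xunit, yunit t, xy t, yx t, ?_⟩
  intro h
  exact ht (key t (by rw [xy, yx]; exact h))
end

section
/- Let R be a local commutative ring in which 2 is invertible, and let C ∈ SL₃(R) with last column (c₁, c₂, c₃) = (C₁₃, C₂₃, C₃₃). Assume that c₁ is a unit, or c₂ is a unit, or 1 − c₃ is a unit. Set a := (c₁, c₂, c₃ − 1) ∈ R³. Then there exist b ∈ R³ and a unit q ∈ R^× such that ∑_{j=1}^3 a_j b_j = 1 and the product matrix ψ₃(a,b,q)·C has last column equal to (0,0,1). -/
open Matrix

/-- The matrix `[a,b,q]` with `(j,k)`-entry `δ_{jk} + (q-1)·a_j·b_k`. -/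
def bracketMatrix {R : Type*} [CommRing R] {n : ℕ} (a b : Fin n → R) (q : Rˣ) :
    Matrix (Fin n) (Fin n) R :=
  Matrix.of fun j k => (if j = k then (1 : R) else 0) + ((q : R) - 1) * a j * b k

/-- `ψₙ(a,b,q) = D · [a,b,q]` where `D = diag(q⁻¹,1,…,1)`. -/
def psiMatrix {R : Type*} [CommRing R] {n : ℕ} (a b : Fin n → R) (q : Rˣ) :
    Matrix (Fin n) (Fin n) R :=
  Matrix.diagonal (fun j : Fin n => if (j : ℕ) = 0 then ((q⁻¹ : Rˣ) : R) else 1) *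
    bracketMatrix a b q

lemma psi_key {R : Type*} [CommRing R] (C : Matrix (Fin 3) (Fin 3) R) (b : Fin 3 → R) (q : Rˣ)
    (hab : C 0 2 * b 0 + C 1 2 * b 1 + (C 2 2 - 1) * b 2 = 1)
    (hq : ((q : R) - 1) * (1 + b 2) = -1) :
    ∀ j : Fin 3, (psiMatrix ![C 0 2, C 1 2, C 2 2 - 1] b q * C) j 2 =
        if j = 2 then 1 else 0 := by
  intro j
  fin_cases j <;>
    simp [psiMatrix, bracketMatrix, Matrix.mul_apply, Fin.sum_univ_three,
      Matrix.diagonal, Matrix.of_apply]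
  · linear_combination ((q⁻¹ : Rˣ) : R) * C 0 2 * ((q : R) - 1) * hab +
      ((q⁻¹ : Rˣ) : R) * C 0 2 * hq
  · linear_combination C 1 2 * ((q : R) - 1) * hab + C 1 2 * hq
  · linear_combination (C 2 2 - 1) * ((q : R) - 1) * hab + (C 2 2 - 1) * hq

/-- Let `R` be a local commutative ring with `2` invertible and `C ∈ SL₃(R)` with last
column `(c₁,c₂,c₃)`, such that `c₁`, `c₂` or `1 - c₃` is a unit. With
`a := (c₁, c₂, c₃ - 1)`, there exist `b ∈ R³` and a unit `q` with `∑ aⱼbⱼ = 1` such that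
`ψ₃(a,b,q)·C` has last column `(0,0,1)`. -/
theorem psi3_moves_into_H {R : Type*} [CommRing R] [IsLocalRing R]
    (h2 : IsUnit (2 : R)) (C : Matrix (Fin 3) (Fin 3) R) (hC : C.det = 1)
    (h : IsUnit (C 0 2) ∨ IsUnit (C 1 2) ∨ IsUnit (1 - C 2 2)) :
    ∃ (b : Fin 3 → R) (q : Rˣ),
      (∑ j, ![C 0 2, C 1 2, C 2 2 - 1] j * b j = 1) ∧
      (∀ j : Fin 3, (psiMatrix ![C 0 2, C 1 2, C 2 2 - 1] b q * C) j 2 =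
        if j = 2 then 1 else 0) := by
  obtain ⟨t, ht⟩ := h2
  have ht2 : ((t⁻¹ : Rˣ) : R) * 2 = 1 := by rw [← ht]; exact t.inv_mul
  by_cases h1 : IsUnit (C 0 2)
  · obtain ⟨u, hu⟩ := h1
    have hui : ((u⁻¹ : Rˣ) : R) * C 0 2 = 1 := by rw [← hu]; exact u.inv_mul
    refine ⟨![((u⁻¹ : Rˣ) : R) * (2 - C 2 2), 0, 1], t⁻¹, ?_, ?_⟩
    · simp [Fin.sum_univ_three]
      linear_combination (2 - C 2 2) * hui
    · apply psi_key
      · simp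
        linear_combination (2 - C 2 2) * hui
      · simp
        linear_combination ht2
  by_cases h1' : IsUnit (C 1 2)
  · obtain ⟨u, hu⟩ := h1'
    have hui : ((u⁻¹ : Rˣ) : R) * C 1 2 = 1 := by rw [← hu]; exact u.inv_mul
    refine ⟨![0, ((u⁻¹ : Rˣ) : R) * (2 - C 2 2), 1], t⁻¹, ?_, ?_⟩
    · simp [Fin.sum_univ_three]
      linear_combination (2 - C 2 2) * hui
    · apply psi_key
      · simp
        linear_combination (2 - C 2 2) * hui
      · simp
        linear_combination ht2
  -- remaining case: 1 - C 2 2 is a unit, C 0 2 and C 1 2 are not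
  have hw : IsUnit (1 - C 2 2) := by tauto
  have hv : IsUnit (C 2 2) := by
    by_contra hc3
    have h1mem : (1 : R) ∈ IsLocalRing.maximalIdeal R := by
      have e : (1 : R) = C 0 2 * (C 1 0 * C 2 1 - C 1 1 * C 2 0) +
          C 1 2 * (C 0 1 * C 2 0 - C 0 0 * C 2 1) +
          C 2 2 * (C 0 0 * C 1 1 - C 0 1 * C 1 0) := by
        rw [← hC, Matrix.det_fin_three]; ring
      rw [e]
      exact Ideal.add_mem _ (Ideal.add_mem _
        (Ideal.mul_mem_right _ _ h1) (Ideal.mul_mem_right _ _ h1'))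
        (Ideal.mul_mem_right _ _ hc3)
    exact h1mem isUnit_one
  obtain ⟨v, hv'⟩ := hv
  obtain ⟨w, hw'⟩ := hw
  have hvi : ((v⁻¹ : Rˣ) : R) * C 2 2 = 1 := by rw [← hv']; exact v.inv_mul
  have hwi : ((w⁻¹ : Rˣ) : R) * (1 - C 2 2) = 1 := by rw [← hw']; exact w.inv_mul
  refine ⟨![0, 0, -((w⁻¹ : Rˣ) : R)], v⁻¹, ?_, ?_⟩
  · simp [Fin.sum_univ_three]
    linear_combination hwi
  · apply psi_key
    · simp
      linear_combination hwi
    · simp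
      linear_combination (-((w⁻¹ : Rˣ) : R)) * hvi + (-((v⁻¹ : Rˣ) : R)) * hwi
end
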